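/- arXiv:2508.11169 — 6 statements merged into one kernel-verified Lean document; each statement's English description precedes it below -/
import Mathlib

section
/- Let N ≥ 1, let z : Fin N → ℂ be injective, w : Fin N → ℂ, f : Fin N → ℂ, and define n, d as the barycentric numerator and denominator. Fix an index k with w_k ≠ 0. Then n(ζ)/d(ζ) tends to f_k as ζ tends to z_k within the set {ζ ∈ ℂ : ζ ≠ z_j for all j}; i.e., the barycentric quotient has a removable discontinuity at each support point, with limiting value equal to the data value there. -/
open Finset Filter

/-- Exact interpolative property: the barycentric quotient has a removable
discontinuity at each support point `z k` (with `w k ≠ 0`), with limit `f k`. -/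
theorem barycentric_removable_discontinuity
    (N : ℕ) (hN : 1 ≤ N) (z : Fin N → ℂ) (hz : Function.Injective z)
    (w f : Fin N → ℂ) (k : Fin N) (hw : w k ≠ 0) :
    Tendsto (fun ζ : ℂ => (∑ j, w j * f j / (ζ - z j)) / (∑ j, w j / (ζ - z j)))
      (nhdsWithin (z k) {ζ : ℂ | ∀ j, ζ ≠ z j}) (nhds (f k)) := by
  set S : Set ℂ := {ζ : ℂ | ∀ j, ζ ≠ z j} with hS
  have hzk : ∀ j ∈ univ.erase k, z k - z j ≠ 0 := by
    intro j hj
    have hjk : j ≠ k := (mem_erase.1 hj).1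
    exact sub_ne_zero.2 fun h => hjk (hz h.symm)
  set g : ℂ → ℂ := fun ζ => w k * f k + (ζ - z k) * ∑ j ∈ univ.erase k, w j * f j / (ζ - z j)
    with hg
  set h : ℂ → ℂ := fun ζ => w k + (ζ - z k) * ∑ j ∈ univ.erase k, w j / (ζ - z j) with hh
  have hgc : ContinuousAt g (z k) := by
    apply continuousAt_const.add
    apply (continuousAt_id.sub continuousAt_const).mul
    exact tendsto_finset_sum _ fun j hj =>
      continuousAt_const.div (continuousAt_id.sub continuousAt_const) (hzk j hj)
  have hhc : ContinuousAt h (z k) := by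
    apply continuousAt_const.add
    apply (continuousAt_id.sub continuousAt_const).mul
    exact tendsto_finset_sum _ fun j hj =>
      continuousAt_const.div (continuousAt_id.sub continuousAt_const) (hzk j hj)
  have hgv : g (z k) = w k * f k := by simp [hg]
  have hhv : h (z k) = w k := by simp [hh]
  have hlim : Tendsto (fun ζ => g ζ / h ζ) (nhdsWithin (z k) S) (nhds (f k)) := by
    have : ContinuousAt (fun ζ => g ζ / h ζ) (z k) := by
      apply hgc.div hhc
      rw [hhv]; exact hw
    have := this.continuousWithinAt (s := S)
    have heq : g (z k) / h (z k) = f k := by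
      rw [hgv, hhv]; field_simp
    rw [ContinuousWithinAt, heq] at this
    exact this
  refine hlim.congr' ?_
  filter_upwards [self_mem_nhdsWithin] with ζ hζ
  have hne : ∀ j, ζ - z j ≠ 0 := fun j => sub_ne_zero.2 (hζ j)
  have hn : g ζ = (ζ - z k) * ∑ j, w j * f j / (ζ - z j) := by
    simp only [hg]
    rw [← Finset.add_sum_erase _ _ (mem_univ k), mul_add]
    exact congrArg₂ _ (by rw [← mul_div_assoc, mul_div_cancel_left₀ _ (hne k)]) rfl
  have hd : h ζ = (ζ - z k) * ∑ j, w j / (ζ - z j) := by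
    simp only [hh]
    rw [← Finset.add_sum_erase _ _ (mem_univ k), mul_add]
    exact congrArg₂ _ (by rw [← mul_div_assoc, mul_div_cancel_left₀ _ (hne k)]) rfl
  rw [hn, hd, mul_div_mul_left _ _ (hne k)]
end

section
/- Let N ≥ 1, let z : Fin N → ℂ be injective, w : Fin N → ℂ, f : Fin N → ℂ, and define n, d as the barycentric numerator and denominator. Define R : ℂ → ℂ by R(ζ) = n(ζ)/d(ζ) if ζ ≠ z_j for all j, and R(z_j) = f_j for each j. If w_k ≠ 0, then R is complex analytic at z_k (AnalyticAt ℂ R z_k). -/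
open Finset

/-- The extended barycentric function `R` (equal to `n/d` off the support points
and to `f j` at `z j`) is complex analytic at each support point with nonzero
weight. -/
theorem barycentric_analytic_at_support_point
    (N : ℕ) (hN : 1 ≤ N) (z : Fin N → ℂ) (hz : Function.Injective z)
    (w f : Fin N → ℂ) (R : ℂ → ℂ)
    (hRnode : ∀ j, R (z j) = f j)
    (hRoff : ∀ ζ : ℂ, (∀ j, ζ ≠ z j) →
      R ζ = (∑ j, w j * f j / (ζ - z j)) / (∑ j, w j / (ζ - z j)))
    (k : Fin N) (hw : w k ≠ 0) :
    AnalyticAt ℂ R (z k) := by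
  set g : ℂ → ℂ := fun ζ =>
    (w k * f k + (ζ - z k) * ∑ j ∈ univ.erase k, w j * f j / (ζ - z j)) /
    (w k + (ζ - z k) * ∑ j ∈ univ.erase k, w j / (ζ - z j)) with hg
  have hzne : ∀ j ∈ univ.erase k, z k - z j ≠ 0 := by
    intro j hj
    have hjk : j ≠ k := (Finset.mem_erase.mp hj).1
    exact sub_ne_zero.mpr fun h => hjk (hz h).symm
  have han1 : AnalyticAt ℂ (fun ζ => ∑ j ∈ univ.erase k, w j * f j / (ζ - z j)) (z k) := by
    apply Finset.analyticAt_fun_sum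
    intro j hj
    exact analyticAt_const.div (analyticAt_id.sub analyticAt_const) (hzne j hj)
  have han2 : AnalyticAt ℂ (fun ζ => ∑ j ∈ univ.erase k, w j / (ζ - z j)) (z k) := by
    apply Finset.analyticAt_fun_sum
    intro j hj
    exact analyticAt_const.div (analyticAt_id.sub analyticAt_const) (hzne j hj)
  have hang : AnalyticAt ℂ g (z k) := by
    apply AnalyticAt.div
    · exact analyticAt_const.add (((analyticAt_id.sub analyticAt_const)).mul han1)
    · exact analyticAt_const.add (((analyticAt_id.sub analyticAt_const)).mul han2)
    · simp [hw]
  apply hang.congr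
  -- show g =ᶠ[𝓝 (z k)] R
  have hU : {ζ : ℂ | ∀ j ∈ univ.erase k, ζ ≠ z j} ∈ nhds (z k) := by
    have : {ζ : ℂ | ∀ j ∈ univ.erase k, ζ ≠ z j} =
        (↑((univ.erase k).image z) : Set ℂ)ᶜ := by
      ext ζ
      simp only [Set.mem_compl_iff, Finset.coe_image, Set.mem_image, Finset.mem_coe,
        Set.mem_setOf_eq, not_exists]
      constructor
      · rintro h x ⟨hx, rfl⟩; exact h x hx rfl
      · intro h j hj hζ; exact h j ⟨hj, hζ.symm⟩
    rw [this]
    refine IsOpen.mem_nhds ((Set.Finite.isClosed (Finset.finite_toSet _)).isOpen_compl) ?_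
    simp only [Set.mem_compl_iff, Finset.coe_image, Set.mem_image, Finset.mem_coe, not_exists]
    rintro x ⟨hx, hxz⟩
    exact (Finset.mem_erase.mp hx).1 (hz hxz)
  filter_upwards [hU] with ζ hζ
  by_cases hζk : ζ = z k
  · subst hζk
    simp only [hg, sub_self, zero_mul, add_zero, hRnode k]
    field_simp
  · have hall : ∀ j, ζ ≠ z j := by
      intro j
      by_cases hjk : j = k
      · subst hjk; exact hζk
      · exact hζ j (Finset.mem_erase.mpr ⟨hjk, Finset.mem_univ j⟩)
    rw [hRoff ζ hall]
    have hsub : ζ - z k ≠ 0 := sub_ne_zero.mpr hζk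
    have hnum : w k * f k + (ζ - z k) * ∑ j ∈ univ.erase k, w j * f j / (ζ - z j)
        = (ζ - z k) * ∑ j, w j * f j / (ζ - z j) := by
      rw [← Finset.add_sum_erase _ _ (Finset.mem_univ k), mul_add, Finset.mul_sum]
      congr 1
      field_simp
    have hden : w k + (ζ - z k) * ∑ j ∈ univ.erase k, w j / (ζ - z j)
        = (ζ - z k) * ∑ j, w j / (ζ - z j) := by
      rw [← Finset.add_sum_erase _ _ (Finset.mem_univ k), mul_add, Finset.mul_sum]
      congr 1
      field_simp
    simp only [hg, hnum, hden]
    rw [mul_div_mul_left _ _ hsub]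
end

section
/- Let N ≥ 1, let z : Fin N → ℂ be injective, w : Fin N → ℂ, f : Fin N → ℂ, and define the extended barycentric function R : ℂ → ℂ by R(ζ) = n(ζ)/d(ζ) off the support points and R(z_j) = f_j. If w_i ≠ 0, then R has a complex derivative at z_i given by R'(z_i) = −(1/w_i) · Σ_{j ≠ i} ((f_i − f_j)/(z_i − z_j)) · w_j (the first-order Schneider–Warner formula). -/
/-!
Subtracting `f i` from `R ζ = n ζ / d ζ` and multiplying numerator and denominator by `ζ - z i`
removes the pole at `z i`: the difference quotient `(R ζ - f i) / (ζ - z i)` equals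
`∑_{j ≠ i} w j (f j - f i) / (ζ - z j)` divided by `w i + (ζ - z i) ∑_{j ≠ i} w j / (ζ - z j)`.
Both are continuous at `z i`, where the second takes the value `w i ≠ 0`, so the difference
quotient converges to the value of their quotient at `z i`.
-/

open Finset Filter Topology

theorem hasDerivAt_of_eventually_slope_eq {𝕜 : Type*} [NontriviallyNormedField 𝕜]
    {φ q : 𝕜 → 𝕜} {c : 𝕜} (hq : ContinuousAt q c)
    (h : ∀ᶠ ζ in 𝓝[≠] c, slope φ c ζ = q ζ) : HasDerivAt φ (q c) c :=
  hasDerivAt_iff_tendsto_slope.2 <|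
    (hq.tendsto.mono_left nhdsWithin_le_nhds).congr' (h.mono fun _ hζ => hζ.symm)

theorem eventually_nhdsNE_forall_ne_of_injective {X ι : Type*} [TopologicalSpace X] [T1Space X]
    [Finite ι] {z : ι → X} (hz : Function.Injective z) (i : ι) :
    ∀ᶠ ζ in 𝓝[≠] z i, ∀ j, ζ ≠ z j := by
  refine eventually_all.2 fun j => ?_
  by_cases hji : j = i
  · subst hji
    exact self_mem_nhdsWithin
  · exact nhdsWithin_le_nhds (eventually_ne_nhds (hz.ne hji).symm)

theorem continuousAt_sum_div_sub {𝕜 ι : Type*} [NontriviallyNormedField 𝕜] {s : Finset ι}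
    {a z : ι → 𝕜} {c : 𝕜} (hz : ∀ j ∈ s, c ≠ z j) :
    ContinuousAt (fun ζ => ∑ j ∈ s, a j / (ζ - z j)) c :=
  tendsto_finsetSum _ fun j hj =>
    continuousAt_const.div (continuousAt_id.sub continuousAt_const) (sub_ne_zero.2 (hz j hj))

namespace Barycentric

variable {𝕜 ι : Type*} [DecidableEq ι] [Fintype ι]

section Field

variable [Field 𝕜] (z w f : ι → 𝕜) (i : ι)

def divDiffNum (ζ : 𝕜) : 𝕜 :=
  ∑ j ∈ univ.erase i, w j * (f j - f i) / (ζ - z j)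

def divDiffDen (ζ : 𝕜) : 𝕜 :=
  w i + (ζ - z i) * ∑ j ∈ univ.erase i, w j / (ζ - z j)

theorem divDiffDen_self : divDiffDen z w i (z i) = w i := by
  simp [divDiffDen]

variable {z w f i}

theorem sum_mul_div_sub_sub_mul_sum (ζ : 𝕜) :
    ∑ j, w j * f j / (ζ - z j) - f i * ∑ j, w j / (ζ - z j) = divDiffNum z w f i ζ := by
  rw [mul_sum, ← sum_sub_distrib, ← add_sum_erase _ _ (mem_univ i), divDiffNum]
  rw [show w i * f i / (ζ - z i) - f i * (w i / (ζ - z i)) = 0 by ring, zero_add]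
  exact sum_congr rfl fun j _ => by ring

theorem sub_mul_sum_div_sub {ζ : 𝕜} (hζ : ζ ≠ z i) :
    (ζ - z i) * ∑ j, w j / (ζ - z j) = divDiffDen z w i ζ := by
  rw [← add_sum_erase _ _ (mem_univ i), mul_add, mul_div_cancel₀ _ (sub_ne_zero.2 hζ),
    divDiffDen]

theorem bary_sub_div_sub {ζ : 𝕜} (hζ : ζ ≠ z i) (hden : divDiffDen z w i ζ ≠ 0) :
    ((∑ j, w j * f j / (ζ - z j)) / (∑ j, w j / (ζ - z j)) - f i) / (ζ - z i) =
      divDiffNum z w f i ζ / divDiffDen z w i ζ := by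
  rw [← sum_mul_div_sub_sub_mul_sum, ← sub_mul_sum_div_sub hζ]
  rw [← sub_mul_sum_div_sub hζ] at hden
  have hd : ∑ j, w j / (ζ - z j) ≠ 0 := right_ne_zero_of_mul hden
  field_simp

end Field

section Analytic

variable [NontriviallyNormedField 𝕜] {z : ι → 𝕜} {i : ι}

theorem continuousAt_divDiffNum (hz : Function.Injective z) (w f : ι → 𝕜) :
    ContinuousAt (divDiffNum z w f i) (z i) :=
  continuousAt_sum_div_sub fun _ hj => hz.ne (ne_of_mem_erase hj).symm

theorem continuousAt_divDiffDen (hz : Function.Injective z) (w : ι → 𝕜) :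
    ContinuousAt (divDiffDen z w i) (z i) :=
  continuousAt_const.add <| (continuousAt_id.sub continuousAt_const).mul <|
    continuousAt_sum_div_sub fun _ hj => hz.ne (ne_of_mem_erase hj).symm

theorem hasDerivAt_node {w f : ι → 𝕜} {R : 𝕜 → 𝕜} (hz : Function.Injective z)
    (hRnode : R (z i) = f i)
    (hRoff : ∀ ζ : 𝕜, (∀ j, ζ ≠ z j) →
      R ζ = (∑ j, w j * f j / (ζ - z j)) / (∑ j, w j / (ζ - z j)))
    (hw : w i ≠ 0) :
    HasDerivAt R (divDiffNum z w f i (z i) / w i) (z i) := by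
  have hden := continuousAt_divDiffDen (i := i) hz w
  rw [← divDiffDen_self z w i] at hw ⊢
  refine hasDerivAt_of_eventually_slope_eq ((continuousAt_divDiffNum hz w f).div hden hw) ?_
  filter_upwards [eventually_nhdsNE_forall_ne_of_injective hz i,
    nhdsWithin_le_nhds (hden.eventually_ne hw)] with ζ hζ hζden
  rw [slope_def_field, hRoff ζ hζ, hRnode]
  exact bary_sub_div_sub (hζ i) hζden

end Analytic

end Barycentric

theorem barycentric_schneider_warner_general
    (N : ℕ) (z : Fin N → ℂ) (hz : Function.Injective z)
    (w f : Fin N → ℂ) (R : ℂ → ℂ)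
    (hRnode : ∀ j, R (z j) = f j)
    (hRoff : ∀ ζ : ℂ, (∀ j, ζ ≠ z j) →
      R ζ = (∑ j, w j * f j / (ζ - z j)) / (∑ j, w j / (ζ - z j)))
    (i : Fin N) (hw : w i ≠ 0) :
    HasDerivAt R
      (-(1 / w i) * ∑ j ∈ Finset.univ.erase i, ((f i - f j) / (z i - z j)) * w j)
      (z i) := by
  refine (Barycentric.hasDerivAt_node hz (hRnode i) hRoff hw).congr_deriv ?_
  rw [Barycentric.divDiffNum, div_eq_inv_mul, one_div, neg_mul_comm, ← sum_neg_distrib]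
  exact congrArg _ (sum_congr rfl fun j _ => by ring)

/-- First-order Schneider–Warner formula: the derivative of the extended
barycentric function at a support point with nonzero weight. -/
theorem barycentric_schneider_warner
    (N : ℕ) (hN : 1 ≤ N) (z : Fin N → ℂ) (hz : Function.Injective z)
    (w f : Fin N → ℂ) (R : ℂ → ℂ)
    (hRnode : ∀ j, R (z j) = f j)
    (hRoff : ∀ ζ : ℂ, (∀ j, ζ ≠ z j) →
      R ζ = (∑ j, w j * f j / (ζ - z j)) / (∑ j, w j / (ζ - z j)))
    (i : Fin N) (hw : w i ≠ 0) :
    HasDerivAt R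
      (-(1 / w i) * ∑ j ∈ Finset.univ.erase i, ((f i - f j) / (z i - z j)) * w j)
      (z i) :=
  barycentric_schneider_warner_general N z hz w f R hRnode hRoff i hw
end

section
/- Let N ≥ 1, let z : Fin N → ℂ be injective, let w : Fin N → ℂ satisfy w_j ≠ 0 for all j, let f : Fin N → ℂ, and let R be the extended barycentric function (R = n/d off the support points, R(z_j) = f_j). Let g : Fin N → ℂ be prescribed derivative values and let B be the N×N complex matrix with B_{ii} = g_i and B_{ij} = (f_i − f_j)/(z_i − z_j) for i ≠ j. Then B · w = 0 (the weight vector lies in the kernel of B) if and only if for every i, R has a complex derivative at z_i equal to g_i. -/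
/-!
Fix a support point `z i`. Multiplying numerator and denominator of `n / d` by `ζ - z i`
cancels the pole at `z i`; subtracting `f i` then gives, near `z i` and off the support points,
`R ζ = f i + (ζ - z i) * S ζ`, where `S` is a quotient of functions that are regular at `z i` and
whose denominator takes the value `w i ≠ 0` there. Hence `R` is differentiable at `z i` with
derivative `S (z i) = (∑ j ≠ i, w j (f j - f i) / (z i - z j)) / w i`, and `(B w) i` is exactly
`w i * (g i - S (z i))`.
-/

open Finset Filter Topology

theorem hasDerivAt_of_eventually_eq_add_smul {𝕜 E : Type*} [NontriviallyNormedField 𝕜]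
    [NormedAddCommGroup E] [NormedSpace 𝕜 E] {F S : 𝕜 → E} {a : 𝕜}
    (hS : ContinuousAt S a)
    (hF : ∀ᶠ x in 𝓝 a, F x = F a + (x - a) • S x) : HasDerivAt F (S a) a := by
  rw [hasDerivAt_iff_tendsto_slope]
  refine (hS.tendsto.mono_left nhdsWithin_le_nhds).congr' ?_
  filter_upwards [nhdsWithin_le_nhds hF, self_mem_nhdsWithin] with x hx hxa
  rw [slope_def_module, hx, add_sub_cancel_left, smul_smul,
    inv_mul_cancel₀ (sub_ne_zero.2 hxa), one_smul]

namespace Barycentric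

section

variable {K : Type*} [Field K] {ι : Type*} [Fintype ι] [DecidableEq ι]
  (z w f : ι → K) (i : ι)

/-- `(ζ - z i) * d ζ`, with the pole of `d` at `z i` cancelled. -/
def nodeDen (ζ : K) : K :=
  w i + (ζ - z i) * ∑ j ∈ univ.erase i, w j / (ζ - z j)

/-- `(R ζ - f i) / (ζ - z i)` for `ζ` near `z i` and off the support points. -/
def nodeSlope (ζ : K) : K :=
  (∑ j ∈ univ.erase i, w j * (f j - f i) / (ζ - z j)) / nodeDen z w i ζ

@[simp]
theorem nodeDen_self : nodeDen z w i (z i) = w i := by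
  simp [nodeDen]

theorem nodeSlope_self :
    nodeSlope z w f i (z i) = (∑ j ∈ univ.erase i, w j * (f j - f i) / (z i - z j)) / w i := by
  rw [nodeSlope, nodeDen_self]

variable {z w f i}

theorem div_eq_add_mul_nodeSlope {ζ : K} (hζ : ∀ j, ζ ≠ z j) (hD : nodeDen z w i ζ ≠ 0) :
    (∑ j, w j * f j / (ζ - z j)) / (∑ j, w j / (ζ - z j)) =
      f i + (ζ - z i) * nodeSlope z w f i ζ := by
  have hsub : ∀ j, ζ - z j ≠ 0 := fun j => sub_ne_zero.2 (hζ j)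
  have hden : (ζ - z i) * ∑ j, w j / (ζ - z j) = nodeDen z w i ζ := by
    rw [nodeDen, ← add_sum_erase _ _ (mem_univ i), mul_add, mul_div_cancel₀ _ (hsub i)]
  have hd : ∑ j, w j / (ζ - z j) ≠ 0 := right_ne_zero_of_mul (hden ▸ hD)
  have hsplit : ∑ j, w j * f j / (ζ - z j) =
      f i * ∑ j, w j / (ζ - z j) + ∑ j ∈ univ.erase i, w j * (f j - f i) / (ζ - z j) := by
    rw [sum_erase _ (by simp), mul_sum, ← sum_add_distrib]
    exact sum_congr rfl fun j _ => by ring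
  rw [hsplit, add_div, mul_div_cancel_right₀ _ hd, nodeSlope, ← hden, mul_div_assoc',
    mul_div_mul_left _ _ (hsub i)]

theorem mulVec_apply_of_hermite {B : Matrix ι ι K} {g : ι → K}
    (hB : ∀ i j, B i j = if i = j then g i else (f i - f j) / (z i - z j)) :
    B.mulVec w i = g i * w i - ∑ j ∈ univ.erase i, w j * (f j - f i) / (z i - z j) := by
  rw [Matrix.mulVec, dotProduct, ← add_sum_erase _ _ (mem_univ i), hB, if_pos rfl,
    sub_eq_add_neg, ← sum_neg_distrib]
  refine congrArg _ (sum_congr rfl fun j hj => ?_)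
  rw [hB, if_neg (ne_of_mem_erase hj).symm]
  ring

end

section

variable {𝕜 : Type*} [NontriviallyNormedField 𝕜] {ι : Type*} [Fintype ι] [DecidableEq ι]
  {z w f : ι → 𝕜} {i : ι}

theorem continuousAt_sum_erase_div_sub (hz : Function.Injective z) (c : ι → 𝕜) :
    ContinuousAt (fun ζ => ∑ j ∈ univ.erase i, c j / (ζ - z j)) (z i) :=
  tendsto_finsetSum _ fun _ hj => continuousAt_const.div (continuousAt_id.sub continuousAt_const)
    (sub_ne_zero.2 (hz.ne (ne_of_mem_erase hj).symm))

theorem continuousAt_nodeDen (hz : Function.Injective z) : ContinuousAt (nodeDen z w i) (z i) :=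
  continuousAt_const.add
    ((continuousAt_id.sub continuousAt_const).mul (continuousAt_sum_erase_div_sub hz w))

theorem continuousAt_nodeSlope (hz : Function.Injective z) (hw : w i ≠ 0) :
    ContinuousAt (nodeSlope z w f i) (z i) :=
  (continuousAt_sum_erase_div_sub hz _).div (continuousAt_nodeDen hz) (by simpa using hw)

theorem hasDerivAt_nodeSlope {R : 𝕜 → 𝕜} (hz : Function.Injective z) (hw : w i ≠ 0)
    (hRnode : R (z i) = f i)
    (hRoff : ∀ ζ : 𝕜, (∀ j, ζ ≠ z j) →
      R ζ = (∑ j, w j * f j / (ζ - z j)) / (∑ j, w j / (ζ - z j))) :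
    HasDerivAt R (nodeSlope z w f i (z i)) (z i) := by
  refine hasDerivAt_of_eventually_eq_add_smul (continuousAt_nodeSlope hz hw) ?_
  have hnodes : ∀ᶠ ζ in 𝓝 (z i), ∀ j ∈ univ.erase i, ζ ≠ z j :=
    (eventually_all_finset _).2 fun j hj => eventually_ne_nhds (hz.ne (ne_of_mem_erase hj).symm)
  filter_upwards [hnodes, (continuousAt_nodeDen hz).eventually_ne (by simpa using hw)]
    with ζ hζ hD
  rw [hRnode, smul_eq_mul]
  obtain rfl | hζi := eq_or_ne ζ (z i)
  · simp [hRnode]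
  · have hζ' : ∀ j, ζ ≠ z j := fun j =>
      if h : j = i then h ▸ hζi else hζ j (mem_erase.2 ⟨h, mem_univ j⟩)
    rw [hRoff ζ hζ', div_eq_add_mul_nodeSlope hζ' hD]

end

end Barycentric

theorem barycentric_hermite_kernel_iff_derivatives_general
    (N : ℕ) (z : Fin N → ℂ) (hz : Function.Injective z)
    (w f : Fin N → ℂ) (hw : ∀ j, w j ≠ 0)
    (R : ℂ → ℂ)
    (hRnode : ∀ j, R (z j) = f j)
    (hRoff : ∀ ζ : ℂ, (∀ j, ζ ≠ z j) →
      R ζ = (∑ j, w j * f j / (ζ - z j)) / (∑ j, w j / (ζ - z j)))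
    (g : Fin N → ℂ)
    (B : Matrix (Fin N) (Fin N) ℂ)
    (hB : ∀ i j, B i j = if i = j then g i else (f i - f j) / (z i - z j)) :
    B.mulVec w = 0 ↔ ∀ i, HasDerivAt R (g i) (z i) := by
  have hderiv : ∀ i, HasDerivAt R (Barycentric.nodeSlope z w f i (z i)) (z i) := fun i =>
    Barycentric.hasDerivAt_nodeSlope hz (hw i) (hRnode i) hRoff
  rw [funext_iff]
  refine forall_congr' fun i => ?_
  rw [Pi.zero_apply, Barycentric.mulVec_apply_of_hermite hB, sub_eq_zero, ← eq_div_iff (hw i),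
    ← Barycentric.nodeSlope_self]
  exact ⟨fun h => h ▸ hderiv i, fun h => h.unique (hderiv i)⟩

/-- AAAbudget Hermite condition: with all weights nonzero, the weight vector lies
in the kernel of the Hermite matrix `B` iff the extended barycentric function has
derivative `g i` at each support point `z i`. -/
theorem barycentric_hermite_kernel_iff_derivatives
    (N : ℕ) (hN : 1 ≤ N) (z : Fin N → ℂ) (hz : Function.Injective z)
    (w f : Fin N → ℂ) (hw : ∀ j, w j ≠ 0)
    (R : ℂ → ℂ)
    (hRnode : ∀ j, R (z j) = f j)
    (hRoff : ∀ ζ : ℂ, (∀ j, ζ ≠ z j) →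
      R ζ = (∑ j, w j * f j / (ζ - z j)) / (∑ j, w j / (ζ - z j)))
    (g : Fin N → ℂ)
    (B : Matrix (Fin N) (Fin N) ℂ)
    (hB : ∀ i j, B i j = if i = j then g i else (f i - f j) / (z i - z j)) :
    B.mulVec w = 0 ↔ ∀ i, HasDerivAt R (g i) (z i) :=
  barycentric_hermite_kernel_iff_derivatives_general N z hz w f hw R hRnode hRoff g B hB
end

section
/- Let N ≥ 2, let z : Fin N → ℂ be injective, w : Fin N → ℂ, f : Fin N → ℂ, and fix an index i with w_i = 0. Suppose Σ_{j ≠ i} ((f_i − f_j)/(z_i − z_j)) · w_j = 0. Define n̂(ζ) = Σ_{j ≠ i} w_j f_j/(ζ − z_j) and d̂(ζ) = Σ_{j ≠ i} w_j/(ζ − z_j), which are defined at ζ = z_i. Then n̂(z_i) = f_i · d̂(z_i); in particular, if d̂(z_i) ≠ 0 then the reduced barycentric rational function still interpolates: n̂(z_i)/d̂(z_i) = f_i. -/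
open Finset

/-- If a barycentric weight vanishes but the corresponding Hermite equation still
holds, the reduced barycentric rational function still interpolates at that node. -/
theorem barycentric_zero_weight_interpolation
    (N : ℕ) (hN : 2 ≤ N) (z : Fin N → ℂ) (hz : Function.Injective z)
    (w f : Fin N → ℂ) (i : Fin N) (hwi : w i = 0)
    (hrow : (∑ j ∈ Finset.univ.erase i, ((f i - f j) / (z i - z j)) * w j) = 0) :
    (∑ j ∈ Finset.univ.erase i, w j * f j / (z i - z j))
      = f i * (∑ j ∈ Finset.univ.erase i, w j / (z i - z j)) ∧
    ((∑ j ∈ Finset.univ.erase i, w j / (z i - z j)) ≠ 0 →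
      (∑ j ∈ Finset.univ.erase i, w j * f j / (z i - z j))
        / (∑ j ∈ Finset.univ.erase i, w j / (z i - z j)) = f i) := by
  have key : (∑ j ∈ Finset.univ.erase i, w j * f j / (z i - z j))
      = f i * (∑ j ∈ Finset.univ.erase i, w j / (z i - z j)) := by
    have h : f i * (∑ j ∈ Finset.univ.erase i, w j / (z i - z j))
        - (∑ j ∈ Finset.univ.erase i, w j * f j / (z i - z j))
        = ∑ j ∈ Finset.univ.erase i, ((f i - f j) / (z i - z j)) * w j := by
      rw [Finset.mul_sum, ← Finset.sum_sub_distrib]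
      refine Finset.sum_congr rfl fun j hj => ?_
      have hji : j ≠ i := Finset.ne_of_mem_erase hj
      have hzz : z i - z j ≠ 0 := sub_ne_zero.mpr (fun h => hji (hz h).symm)
      field_simp
    rw [hrow] at h
    linear_combination -h
  refine ⟨key, fun hd => ?_⟩
  rw [key, mul_div_assoc, div_self hd, mul_one]
end

section
/- Let N ≥ 1, let z : Fin N → ℂ be injective, and let p, q be complex polynomials with deg p ≤ N − 1, deg q ≤ N − 1, and q(z_j) ≠ 0 for all j. Define weights w_j = q(z_j) · Π_{k ≠ j} (z_j − z_k)⁻¹ and data f_j = p(z_j)/q(z_j), and let n, d be the barycentric numerator and denominator with these weights and data. Then w_j ≠ 0 for all j, and for every ζ ∈ ℂ with ζ ≠ z_j for all j and q(ζ) ≠ 0, one has d(ζ) ≠ 0 and n(ζ)/d(ζ) = p(ζ)/q(ζ); i.e., any rational function of type (N−1, N−1) with finite values at the support points admits a barycentric representation with these support points. -/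
open Finset

lemma barycentric_key (N : ℕ) (z : Fin N → ℂ) (hz : Function.Injective z)
    (s : Polynomial ℂ) (hs : s.degree < (N : ℕ)) (ζ : ℂ) (hζ : ∀ j, ζ ≠ z j) :
    ∑ j, s.eval (z j) * (∏ k ∈ Finset.univ.erase j, (z j - z k)⁻¹) / (ζ - z j)
      = s.eval ζ / ∏ k, (ζ - z k) := by
  have hsub : ∀ k, ζ - z k ≠ 0 := fun k => sub_ne_zero.mpr (hζ k)
  have hL : (∏ k, (ζ - z k)) ≠ 0 := prod_ne_zero_iff.mpr fun k _ => hsub k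
  have hinj : Set.InjOn z (Finset.univ : Finset (Fin N)) := hz.injOn
  have hcard : s.degree < (Finset.univ : Finset (Fin N)).card := by
    simpa using hs
  have heval : s.eval ζ = ∑ j, s.eval (z j) *
      ((∏ k ∈ Finset.univ.erase j, (z j - z k)⁻¹) * ∏ k ∈ Finset.univ.erase j, (ζ - z k)) := by
    conv_lhs => rw [Lagrange.eq_interpolate hinj hcard]
    rw [Lagrange.interpolate_apply, Polynomial.eval_finset_sum]
    refine Finset.sum_congr rfl fun j _ => ?_
    rw [Polynomial.eval_mul, Polynomial.eval_C, Lagrange.basis, Polynomial.eval_prod,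
      ← Finset.prod_mul_distrib]
    congr 1
    refine Finset.prod_congr rfl fun k _ => ?_
    simp [Lagrange.basisDivisor]
  rw [heval, Finset.sum_div]
  refine Finset.sum_congr rfl fun j _ => ?_
  have hLj : (∏ k, (ζ - z k)) = (ζ - z j) * ∏ k ∈ Finset.univ.erase j, (ζ - z k) :=
    (Finset.mul_prod_erase _ _ (mem_univ j)).symm
  have herase : (∏ k ∈ Finset.univ.erase j, (ζ - z k)) ≠ 0 :=
    prod_ne_zero_iff.mpr fun k _ => hsub k
  rw [hLj, div_eq_div_iff (hsub j) (mul_ne_zero (hsub j) herase)]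
  ring

/-- Generality: any rational function `p/q` of type `(N-1, N-1)` taking finite
values at the support points admits a barycentric representation with those
support points; the indicated weights are nonzero and realize it. -/
theorem barycentric_representation_of_rational_functions
    (N : ℕ) (hN : 1 ≤ N) (z : Fin N → ℂ) (hz : Function.Injective z)
    (p q : Polynomial ℂ)
    (hp : p.degree ≤ (N - 1 : ℕ)) (hq : q.degree ≤ (N - 1 : ℕ))
    (hqz : ∀ j, q.eval (z j) ≠ 0)
    (w f : Fin N → ℂ)
    (hw : ∀ j, w j = q.eval (z j) * ∏ k ∈ Finset.univ.erase j, (z j - z k)⁻¹)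
    (hf : ∀ j, f j = p.eval (z j) / q.eval (z j)) :
    (∀ j, w j ≠ 0) ∧
    ∀ ζ : ℂ, (∀ j, ζ ≠ z j) → q.eval ζ ≠ 0 →
      (∑ j, w j / (ζ - z j)) ≠ 0 ∧
      (∑ j, w j * f j / (ζ - z j)) / (∑ j, w j / (ζ - z j))
        = p.eval ζ / q.eval ζ := by
  have hdeg : ((N - 1 : ℕ) : WithBot ℕ) < (N : ℕ) := by
    exact_mod_cast Nat.sub_lt hN one_pos
  have hp' : p.degree < (N : ℕ) := lt_of_le_of_lt hp hdeg
  have hq' : q.degree < (N : ℕ) := lt_of_le_of_lt hq hdeg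
  have hwne : ∀ j, w j ≠ 0 := by
    intro j
    rw [hw j]
    refine mul_ne_zero (hqz j) (prod_ne_zero_iff.mpr fun k hk => ?_)
    exact inv_ne_zero (sub_ne_zero.mpr fun h => (mem_erase.mp hk).1.symm (hz h))
  refine ⟨hwne, fun ζ hζ hqζ => ?_⟩
  have hL : (∏ k, (ζ - z k)) ≠ 0 :=
    prod_ne_zero_iff.mpr fun k _ => sub_ne_zero.mpr (hζ k)
  have hd : (∑ j, w j / (ζ - z j)) = q.eval ζ / ∏ k, (ζ - z k) := by
    rw [← barycentric_key N z hz q hq' ζ hζ]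
    exact Finset.sum_congr rfl fun j _ => by rw [hw j]
  have hn : (∑ j, w j * f j / (ζ - z j)) = p.eval ζ / ∏ k, (ζ - z k) := by
    rw [← barycentric_key N z hz p hp' ζ hζ]
    refine Finset.sum_congr rfl fun j _ => ?_
    rw [hw j, hf j]
    congr 1
    generalize (∏ k ∈ Finset.univ.erase j, (z j - z k)⁻¹) = I
    rw [mul_comm, ← mul_assoc, div_mul_cancel₀ _ (hqz j)]
  refine ⟨by rw [hd]; exact div_ne_zero hqζ hL, ?_⟩
  rw [hd, hn, div_div_div_cancel_right₀ hL]
end
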